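/- Let s, t ∈ ℝ with ρ ≤ |t| ≤ √(ρ²+1) and ρ ≤ |s| ≤ √(ρ²+1) for some ρ > 0, and let x, y ∈ ℝ^d with ‖x‖² ≤ t² − ρ² and ‖y‖² ≤ s² − ρ². Then I₃^ρ := √(t² − ρ² − ‖x‖²)·√(s² − ρ² − ‖y‖²)·sign(st) and I₂^ρ := √(1 + ρ² − t²)·√(1 + ρ² − s²) satisfy |⟨x,y⟩·sign(st) + I₃^ρ| + I₂^ρ ≤ 1. -/

import Mathlib

/-!
Put `a = ‖x‖`, `b = ‖y‖`. By the hypotheses,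
`(a, √(t² - ρ² - a²), √(1 + ρ² - t²))` and `(b, √(s² - ρ² - b²), √(1 + ρ² - s²))` are unit
vectors of `ℝ³`. Since `|sign (s t)| ≤ 1` and `|⟪x, y⟫| ≤ a b`, the left-hand side is at most the
inner product of these two unit vectors, hence at most `1` by Cauchy–Schwarz.
-/

lemma Real.abs_sign_le_one (r : ℝ) : |Real.sign r| ≤ 1 := by
  rcases Real.sign_apply_eq r with h | h | h <;> simp [h]

lemma add_mul_add_mul_le_one {a b u v r w : ℝ} (h₁ : a ^ 2 + u ^ 2 + r ^ 2 = 1)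
    (h₂ : b ^ 2 + v ^ 2 + w ^ 2 = 1) : a * b + u * v + r * w ≤ 1 := by
  nlinarith [sq_nonneg (a - b), sq_nonneg (u - v), sq_nonneg (r - w)]

lemma sq_add_sq_sqrt_add_sq_sqrt {ρ t a : ℝ} (ha : a ^ 2 ≤ t ^ 2 - ρ ^ 2)
    (ht : |t| ≤ √(ρ ^ 2 + 1)) :
    a ^ 2 + √(t ^ 2 - ρ ^ 2 - a ^ 2) ^ 2 + √(1 + ρ ^ 2 - t ^ 2) ^ 2 = 1 := by
  have ht' : t ^ 2 ≤ ρ ^ 2 + 1 := by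
    simpa only [sq_abs] using (Real.le_sqrt (abs_nonneg t) (by positivity)).1 ht
  rw [Real.sq_sqrt (by linarith), Real.sq_sqrt (by linarith)]
  ring

theorem stmt_8_general (d : ℕ) (ρ s t : ℝ)
    (ht2 : |t| ≤ Real.sqrt (ρ^2 + 1))
    (hs2 : |s| ≤ Real.sqrt (ρ^2 + 1))
    (x y : EuclideanSpace ℝ (Fin d))
    (hx : ‖x‖^2 ≤ t^2 - ρ^2) (hy : ‖y‖^2 ≤ s^2 - ρ^2) :
    |(inner ℝ x y : ℝ) * Real.sign (s * t) +
        Real.sqrt (t^2 - ρ^2 - ‖x‖^2) * Real.sqrt (s^2 - ρ^2 - ‖y‖^2) * Real.sign (s * t)| +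
      Real.sqrt (1 + ρ^2 - t^2) * Real.sqrt (1 + ρ^2 - s^2) ≤ 1 := by
  set u := √(t ^ 2 - ρ ^ 2 - ‖x‖ ^ 2)
  set v := √(s ^ 2 - ρ ^ 2 - ‖y‖ ^ 2)
  have huv : 0 ≤ u * v := mul_nonneg (Real.sqrt_nonneg _) (Real.sqrt_nonneg _)
  have hsum : |inner ℝ x y + u * v| ≤ ‖x‖ * ‖y‖ + u * v :=
    calc |inner ℝ x y + u * v| ≤ |inner ℝ x y| + |u * v| := abs_add_le _ _
      _ ≤ ‖x‖ * ‖y‖ + u * v := by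
        rw [abs_of_nonneg huv]; gcongr; exact abs_real_inner_le_norm x y
  set r := √(1 + ρ ^ 2 - t ^ 2)
  set w := √(1 + ρ ^ 2 - s ^ 2)
  calc _ = |inner ℝ x y + u * v| * |Real.sign (s * t)| + r * w := by rw [← abs_mul, add_mul]
    _ ≤ |inner ℝ x y + u * v| + r * w := by
        gcongr; exact mul_le_of_le_one_right (abs_nonneg _) (Real.abs_sign_le_one _)
    _ ≤ ‖x‖ * ‖y‖ + u * v + r * w := by gcongr
    _ ≤ 1 := add_mul_add_mul_le_one (sq_add_sq_sqrt_add_sq_sqrt hx ht2)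
      (sq_add_sq_sqrt_add_sq_sqrt hy hs2)

theorem stmt_8 (d : ℕ) (ρ s t : ℝ) (hρ : 0 < ρ)
    (ht1 : ρ ≤ |t|) (ht2 : |t| ≤ Real.sqrt (ρ^2 + 1))
    (hs1 : ρ ≤ |s|) (hs2 : |s| ≤ Real.sqrt (ρ^2 + 1))
    (x y : EuclideanSpace ℝ (Fin d))
    (hx : ‖x‖^2 ≤ t^2 - ρ^2) (hy : ‖y‖^2 ≤ s^2 - ρ^2) :
    |(inner ℝ x y : ℝ) * Real.sign (s * t) +
        Real.sqrt (t^2 - ρ^2 - ‖x‖^2) * Real.sqrt (s^2 - ρ^2 - ‖y‖^2) * Real.sign (s * t)| +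
      Real.sqrt (1 + ρ^2 - t^2) * Real.sqrt (1 + ρ^2 - s^2) ≤ 1 :=
  stmt_8_general d ρ s t ht2 hs2 x y hx hy
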